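/- In the setting of Lemma H(A) (a Hopf-Galois algebra (R,μ) with a sextuple (τ,ω,g,h,c,ξ) satisfying the conditions of Theorem mainmain), the formulas τ'(r⊗s) = g·r ⊗ τ(s) and ω'(r⊗s) = h·r ⊗ ω(s), for r⊗s ∈ H̲(R), define algebra automorphisms τ', ω' of H̲(R), and τ'ω' = ω'τ'. -/
import Mathlib


open TensorProduct MulOpposite

set_option synthInstance.maxHeartbeats 1000000
set_option maxHeartbeats 1000000

noncomputable section

universe u v w

section Maps

variable (k : Type u) [Field k] (R : Type v) [Ring R] [Algebra k R]

/-- `unop` as a `k`-linear map. -/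
def unopL : Rᵐᵒᵖ →ₗ[k] R :=
  ((opLinearEquiv k : R ≃ₗ[k] Rᵐᵒᵖ)).symm.toLinearMap

/-- `op` as a `k`-linear map. -/
def opL : R →ₗ[k] Rᵐᵒᵖ :=
  (opLinearEquiv k : R ≃ₗ[k] Rᵐᵒᵖ).toLinearMap

/-- `Rᵐᵒᵖ ⊗ R → R`, `op x ⊗ y ↦ x * y`. -/
def opMulL : Rᵐᵒᵖ ⊗[k] R →ₗ[k] R :=
  LinearMap.mul' k R ∘ₗ LinearMap.rTensor R (unopL k R)

/-- `R ⊗ Rᵐᵒᵖ → R`, `x ⊗ op y ↦ x * y`. -/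
def mulOpL : R ⊗[k] Rᵐᵒᵖ →ₗ[k] R :=
  LinearMap.mul' k R ∘ₗ LinearMap.lTensor R (unopL k R)

/-- Conjugation `r ↦ g r g⁻¹` as a `k`-linear map. -/
def conjL (g : Rˣ) : R →ₗ[k] R :=
  LinearMap.mulLeft k (g : R) ∘ₗ LinearMap.mulRight k ((g⁻¹ : Rˣ) : R)

/-- Conjugation on the opposite algebra. -/
def conjOpL (g : Rˣ) : Rᵐᵒᵖ →ₗ[k] Rᵐᵒᵖ :=
  opL k R ∘ₗ conjL k R g ∘ₗ unopL k R

end Maps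

/-- A linear map `R →ₗ A` induces `Rᵐᵒᵖ →ₗ Aᵐᵒᵖ`. -/
def opMapL (k : Type u) [Field k] {R : Type v} {A : Type w} [Ring R] [Algebra k R]
    [Ring A] [Algebra k A] (f : R →ₗ[k] A) : Rᵐᵒᵖ →ₗ[k] Aᵐᵒᵖ :=
  opL k A ∘ₗ f ∘ₗ unopL k R

variable (k : Type u) [Field k]

/-- A Hopf-Galois algebra structure (quantum torsor) on an algebra `R`:
an algebra map `μ : R → R ⊗ Rᵒᵖ ⊗ R` which is coassociative and satisfies the
two counit-type axioms `(m ⊗ id) ∘ μ = η ⊗ id` and `(id ⊗ m) ∘ μ = id ⊗ η`. -/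
structure HopfGaloisStr (R : Type v) [Ring R] [Algebra k R] where
  μ : R →ₐ[k] R ⊗[k] (Rᵐᵒᵖ ⊗[k] R)
  coassoc :
    LinearMap.lTensor R (LinearMap.lTensor Rᵐᵒᵖ μ.toLinearMap) ∘ₗ μ.toLinearMap
      = LinearMap.lTensor R (TensorProduct.assoc k Rᵐᵒᵖ R (Rᵐᵒᵖ ⊗[k] R)).toLinearMap
        ∘ₗ (TensorProduct.assoc k R (Rᵐᵒᵖ ⊗[k] R) (Rᵐᵒᵖ ⊗[k] R)).toLinearMap
        ∘ₗ LinearMap.rTensor (Rᵐᵒᵖ ⊗[k] R) μ.toLinearMap ∘ₗ μ.toLinearMap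
  mul12 : ∀ r : R,
    LinearMap.rTensor R (mulOpL k R) ((TensorProduct.assoc k R Rᵐᵒᵖ R).symm (μ r))
      = (1 : R) ⊗ₜ[k] r
  mul23 : ∀ r : R,
    LinearMap.lTensor R (opMulL k R) (μ r) = r ⊗ₜ[k] (1 : R)

namespace HopfGaloisStr

variable {k} {R : Type v} [Ring R] [Algebra k R]

/-- A group-like element of a Hopf-Galois algebra: an invertible `g` with
`μ(g) = g ⊗ g⁻¹ ⊗ g`. -/
def IsGroupLike (H : HopfGaloisStr k R) (g : Rˣ) : Prop :=
  H.μ (g : R) = (g : R) ⊗ₜ[k] ((op ((g⁻¹ : Rˣ) : R)) ⊗ₜ[k] (g : R))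

/-- A `(g,h)`-skew primitive element of a Hopf-Galois algebra:
`μ(x) = x ⊗ h⁻¹ ⊗ h − g ⊗ g⁻¹xh⁻¹ ⊗ h + g ⊗ g⁻¹ ⊗ x`. -/
def IsSkewPrimitive (H : HopfGaloisStr k R) (g h : Rˣ) (x : R) : Prop :=
  H.μ x = x ⊗ₜ[k] ((op ((h⁻¹ : Rˣ) : R)) ⊗ₜ[k] ((h : Rˣ) : R))
    - (g : R) ⊗ₜ[k] ((op (((g⁻¹ : Rˣ) : R) * x * ((h⁻¹ : Rˣ) : R))) ⊗ₜ[k] (h : R))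
    + (g : R) ⊗ₜ[k] ((op ((g⁻¹ : Rˣ) : R)) ⊗ₜ[k] x)

/-- A quasi-central group-like element: there is a character `α` on the
group-likes such that `x g = α(x) g x` for every group-like `x`. -/
def IsQuasiCentral (H : HopfGaloisStr k R) (g : Rˣ) : Prop :=
  H.IsGroupLike g ∧ ∃ α : Rˣ → kˣ,
    (∀ x y : Rˣ, H.IsGroupLike x → H.IsGroupLike y → α (x * y) = α x * α y) ∧
    ∀ x : Rˣ, H.IsGroupLike x → (x : R) * (g : R) = ((α x : k)) • ((g : R) * (x : R))

end HopfGaloisStr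

section HR

variable {k} {R : Type v} [Ring R] [Algebra k R]

/-- The comultiplication-type map on `Rᵐᵒᵖ ⊗ R`:
`x ⊗ y ↦ (x ⊗ y_(1)) ⊗ (y_(2) ⊗ y_(3))`. -/
def deltaMap (H : HopfGaloisStr k R) :
    Rᵐᵒᵖ ⊗[k] R →ₗ[k] (Rᵐᵒᵖ ⊗[k] R) ⊗[k] (Rᵐᵒᵖ ⊗[k] R) :=
  (TensorProduct.assoc k Rᵐᵒᵖ R (Rᵐᵒᵖ ⊗[k] R)).symm.toLinearMap
    ∘ₗ LinearMap.lTensor Rᵐᵒᵖ H.μ.toLinearMap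

/-- The map `x ⊗ y ↦ x y_(1) ⊗ (y_(2) ⊗ y_(3))`. -/
def PhiMap (H : HopfGaloisStr k R) :
    Rᵐᵒᵖ ⊗[k] R →ₗ[k] R ⊗[k] (Rᵐᵒᵖ ⊗[k] R) :=
  LinearMap.rTensor (Rᵐᵒᵖ ⊗[k] R) (opMulL k R) ∘ₗ deltaMap H

/-- The underlying subspace of the Hopf algebra `H̲(R)` associated to a
Hopf-Galois algebra `R`: the set of `x ⊗ y ∈ Rᵒᵖ ⊗ R` such that
`x y_(1) ⊗ y_(2) ⊗ y_(3) = 1 ⊗ x ⊗ y`. -/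
def HRsub (H : HopfGaloisStr k R) : Submodule k (Rᵐᵒᵖ ⊗[k] R) :=
  LinearMap.eqLocus (PhiMap H) ((TensorProduct.mk k R (Rᵐᵒᵖ ⊗[k] R)) 1)

/-- Group-like elements of `H̲(R)`: elements `u ∈ H̲(R)` with `Δ(u) = u ⊗ u`
and `ε(u) = 1`. -/
def IsGroupLikeHR (H : HopfGaloisStr k R) (u : Rᵐᵒᵖ ⊗[k] R) : Prop :=
  u ∈ HRsub H ∧ deltaMap H u = u ⊗ₜ[k] u ∧ opMulL k R u = 1

/-- `(u₀,u₁)`-skew primitive elements of `H̲(R)`: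
elements `x ∈ H̲(R)` with `Δ(x) = x ⊗ u₁ + u₀ ⊗ x`. -/
def IsSkewPrimitiveHR (H : HopfGaloisStr k R) (u₀ u₁ x : Rᵐᵒᵖ ⊗[k] R) : Prop :=
  x ∈ HRsub H ∧ deltaMap H x = x ⊗ₜ[k] u₁ + u₀ ⊗ₜ[k] x

end HR

/-- A (not necessarily commutative or cocommutative) Hopf algebra structure
on an algebra `H`, spelled out in terms of linear-map identities. -/
structure HopfAlgStr (H : Type w) [Ring H] [Algebra k H] where
  comul : H →ₐ[k] H ⊗[k] H
  counit : H →ₐ[k] k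
  coassoc : ∀ x : H,
    (TensorProduct.assoc k H H H) (LinearMap.rTensor H comul.toLinearMap (comul x))
      = LinearMap.lTensor H comul.toLinearMap (comul x)
  counit_id : ∀ x : H,
    (TensorProduct.lid k H) (LinearMap.rTensor H counit.toLinearMap (comul x)) = x
  id_counit : ∀ x : H,
    (TensorProduct.rid k H) (LinearMap.lTensor H counit.toLinearMap (comul x)) = x
  antipode : H →ₗ[k] H
  antipode_left : ∀ x : H,
    LinearMap.mul' k H (LinearMap.rTensor H antipode (comul x))
      = algebraMap k H (counit x)
  antipode_right : ∀ x : H,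
    LinearMap.mul' k H (LinearMap.lTensor H antipode (comul x))
      = algebraMap k H (counit x)

namespace HopfAlgStr

variable {k} {H : Type w} [Ring H] [Algebra k H]

/-- Group-like element of a Hopf algebra. -/
def IsGroupLikeElem (s : HopfAlgStr k H) (g : H) : Prop :=
  s.comul g = g ⊗ₜ[k] g ∧ s.counit g = 1

/-- `(g,h)`-skew primitive element of a Hopf algebra: `Δ(x) = x ⊗ h + g ⊗ x`. -/
def IsSkewPrim (s : HopfAlgStr k H) (g h x : H) : Prop :=
  s.comul x = x ⊗ₜ[k] h + g ⊗ₜ[k] x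

/-- Convolution product of two linear functionals. -/
def conv (s : HopfAlgStr k H) (α β : H →ₗ[k] k) : H →ₗ[k] k :=
  LinearMap.mul' k k ∘ₗ TensorProduct.map α β ∘ₗ s.comul.toLinearMap

/-- The map `r ↦ α(r_(1)) r_(2)`. -/
def sweedL (s : HopfAlgStr k H) (α : H →ₗ[k] k) : H →ₗ[k] H :=
  (TensorProduct.lid k H).toLinearMap ∘ₗ TensorProduct.map α LinearMap.id
    ∘ₗ s.comul.toLinearMap

/-- The map `r ↦ (g r_(1) g⁻¹) α(r_(2))`. -/
def sweedConj (s : HopfAlgStr k H) (g : Hˣ) (α : H →ₗ[k] k) : H →ₗ[k] H :=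
  (TensorProduct.rid k H).toLinearMap ∘ₗ TensorProduct.map (conjL k H g) α
    ∘ₗ s.comul.toLinearMap

end HopfAlgStr

section Galois

variable {k} {R : Type v} [Ring R] [Algebra k R] {H : Type w} [Ring H] [Algebra k H]

/-- The Galois map `R ⊗ R → R ⊗ H`, `r ⊗ s ↦ r s_(0) ⊗ s_(1)`, for a coaction `ρ`. -/
def canMap (ρ : R →ₐ[k] R ⊗[k] H) : R ⊗[k] R →ₗ[k] R ⊗[k] H :=
  LinearMap.rTensor H (LinearMap.mul' k R)
    ∘ₗ (TensorProduct.assoc k R R H).symm.toLinearMap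
    ∘ₗ LinearMap.lTensor R ρ.toLinearMap

/-- `R` is a right Hopf-Galois object over the Hopf algebra `(H, s)` via the
coaction `ρ`: `ρ` is a comodule-algebra structure with trivial coinvariants and
bijective Galois map. -/
structure IsHopfGaloisObject (s : HopfAlgStr k H) (ρ : R →ₐ[k] R ⊗[k] H) : Prop where
  coassoc : ∀ r : R,
    (TensorProduct.assoc k R H H) (LinearMap.rTensor H ρ.toLinearMap (ρ r))
      = LinearMap.lTensor R s.comul.toLinearMap (ρ r)
  counit : ∀ r : R,
    (TensorProduct.rid k R) (LinearMap.lTensor R s.counit.toLinearMap (ρ r)) = r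
  coinvariants : ∀ r : R, ρ r = r ⊗ₜ[k] (1 : H) → ∃ a : k, r = a • (1 : R)
  galois : Function.Bijective (canMap ρ)

end Galois

/-- A presentation of the generalized ambiskew polynomial algebra
`A(R, X, Y, τ, ω, c, ξ)`: an algebra `A` containing `R` (via `i`) and elements
`X, Y` subject to `X r = τ(r) X`, `Y r = ω(r) Y`, `XY − ξ YX = c`, which is a
free left `R`-module with basis `{Xᵃ Yᵇ}`. -/
structure IsAmbiskew {R : Type v} [Ring R] [Algebra k R]
    (τ ω : R ≃ₐ[k] R) (c : R) (ξ : kˣ)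
    {A : Type w} [Ring A] [Algebra k A] (i : R →ₐ[k] A) (X Y : A) : Prop where
  commX : ∀ r : R, X * i r = i (τ r) * X
  commY : ∀ r : R, Y * i r = i (ω r) * Y
  bracket : X * Y - (ξ : k) • (Y * X) = i c
  free : Function.Bijective (fun f : (ℕ × ℕ) →₀ R =>
    f.sum fun p r => i r * X ^ p.1 * Y ^ p.2)

end

noncomputable section

variable {k : Type u} [Field k]

/-- The conditions of Theorem mainmain on a sextuple `(τ, ω, g, h, c, ξ)`
attached to a Hopf-Galois algebra `(R, μ)`. -/
structure MainMainHyp {R : Type v} [Ring R] [Algebra k R]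
    (H : HopfGaloisStr k R) (τ ω : R ≃ₐ[k] R) (g h : Rˣ) (c : R) (ξ : kˣ) :
    Prop where
  /-- `τ` and `ω` commute. -/
  comm : ∀ r : R, τ (ω r) = ω (τ r)
  /-- `τ(r)_(1) ⊗ τ(r)_(2) ⊗ τ(r)_(3) = τ(r_(1)) ⊗ r_(2) ⊗ r_(3)`. -/
  idτ1 : ∀ r : R,
    H.μ (τ r) = LinearMap.rTensor (Rᵐᵒᵖ ⊗[k] R) τ.toLinearMap (H.μ r)
  /-- `τ(r)_(1) ⊗ τ(r)_(2) ⊗ τ(r)_(3) = τ(r_(1)) ⊗ τ(r_(2)) ⊗ τ(r_(3))`. -/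
  idτ2 : ∀ r : R,
    H.μ (τ r) = TensorProduct.map τ.toLinearMap
      (TensorProduct.map (opMapL k τ.toLinearMap) τ.toLinearMap) (H.μ r)
  /-- `ω(r)_(1) ⊗ ω(r)_(2) ⊗ ω(r)_(3) = ω(r_(1)) ⊗ r_(2) ⊗ r_(3)`. -/
  idω1 : ∀ r : R,
    H.μ (ω r) = LinearMap.rTensor (Rᵐᵒᵖ ⊗[k] R) ω.toLinearMap (H.μ r)
  /-- `ω(r)_(1) ⊗ ω(r)_(2) ⊗ ω(r)_(3) = ω(r_(1)) ⊗ ω(r_(2)) ⊗ ω(r_(3))`. -/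
  idω2 : ∀ r : R,
    H.μ (ω r) = TensorProduct.map ω.toLinearMap
      (TensorProduct.map (opMapL k ω.toLinearMap) ω.toLinearMap) (H.μ r)
  /-- `g` is a quasi-central group-like element. -/
  qcg : H.IsQuasiCentral g
  /-- `h` is a quasi-central group-like element. -/
  qch : H.IsQuasiCentral h
  /-- `g·r_(1) ⊗ g·r_(2) ⊗ r_(3) = τ(r_(1)) ⊗ τ(r_(2)) ⊗ r_(3)`. -/
  idg : ∀ r : R,
    TensorProduct.map (conjL k R g) (LinearMap.rTensor R (conjOpL k R g)) (H.μ r)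
      = TensorProduct.map τ.toLinearMap
          (LinearMap.rTensor R (opMapL k τ.toLinearMap)) (H.μ r)
  /-- `h·r_(1) ⊗ h·r_(2) ⊗ r_(3) = ω(r_(1)) ⊗ ω(r_(2)) ⊗ r_(3)`. -/
  idh : ∀ r : R,
    TensorProduct.map (conjL k R h) (LinearMap.rTensor R (conjOpL k R h)) (H.μ r)
      = TensorProduct.map ω.toLinearMap
          (LinearMap.rTensor R (opMapL k ω.toLinearMap)) (H.μ r)
  /-- `τ(h) = ξ h`. -/
  ξh : τ ((h : Rˣ) : R) = (ξ : k) • ((h : Rˣ) : R)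
  /-- `ω(g) = ξ⁻¹ g`. -/
  ξg : ω ((g : Rˣ) : R) = ((ξ⁻¹ : kˣ) : k) • ((g : Rˣ) : R)
  /-- `c` is `σ`-central for `σ = τω`. -/
  sc : ∀ r : R, c * r = τ (ω r) * c
  /-- `c` is `(gh, 1)`-skew primitive. -/
  prim : H.IsSkewPrimitive (g * h) 1 c

/-- The Hopf-Galois structure `HA` on `A` extends `(R, μ)` along `i`. -/
def ExtendsHG {R : Type v} [Ring R] [Algebra k R] {A : Type w} [Ring A]
    [Algebra k A] (H : HopfGaloisStr k R) (HA : HopfGaloisStr k A)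
    (i : R →ₐ[k] A) : Prop :=
  ∀ r : R, HA.μ (i r) = TensorProduct.map i.toLinearMap
    (TensorProduct.map (opMapL k i.toLinearMap) i.toLinearMap) (H.μ r)

/-- The formula `μ(X) = X⊗1⊗1 − g ⊗ g⁻¹X ⊗ 1 + g ⊗ g⁻¹ ⊗ X`. -/
def MuFormula {R : Type v} [Ring R] [Algebra k R] {A : Type w} [Ring A]
    [Algebra k A] (HA : HopfGaloisStr k A) (i : R →ₐ[k] A) (g : Rˣ) (X : A) :
    Prop :=
  HA.μ X = X ⊗ₜ[k] ((MulOpposite.op (1 : A)) ⊗ₜ[k] (1 : A))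
    - i ((g : Rˣ) : R) ⊗ₜ[k]
        ((MulOpposite.op (i (((g⁻¹ : Rˣ)) : R) * X)) ⊗ₜ[k] (1 : A))
    + i ((g : Rˣ) : R) ⊗ₜ[k]
        ((MulOpposite.op (i (((g⁻¹ : Rˣ)) : R))) ⊗ₜ[k] X)

/-- The map `Rᵒᵖ ⊗ R → Aᵒᵖ ⊗ A` induced by `i : R → A`. -/
def incl2 {R : Type v} [Ring R] [Algebra k R] {A : Type w} [Ring A]
    [Algebra k A] (i : R →ₐ[k] A) : Rᵐᵒᵖ ⊗[k] R →ₗ[k] Aᵐᵒᵖ ⊗[k] A :=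
  TensorProduct.map (opMapL k i.toLinearMap) i.toLinearMap

/-- The map `r ⊗ s ↦ (g·r) ⊗ τ(s)` on `Rᵒᵖ ⊗ R` (conjugation on the first leg). -/
def hrAuto {R : Type v} [Ring R] [Algebra k R] (g : Rˣ) (τ : R ≃ₐ[k] R) :
    Rᵐᵒᵖ ⊗[k] R →ₗ[k] Rᵐᵒᵖ ⊗[k] R :=
  TensorProduct.map (conjOpL k R g) τ.toLinearMap

/-- The element `φ(g) = g⁻¹ ⊗ g` of `Rᵒᵖ ⊗ R`. -/
def phiEl {R : Type v} [Ring R] [Algebra k R] (g : Rˣ) : Rᵐᵒᵖ ⊗[k] R :=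
  (MulOpposite.op (((g⁻¹ : Rˣ)) : R)) ⊗ₜ[k] ((g : Rˣ) : R)

end

noncomputable section MyAux

variable {k : Type u} [Field k]

section Aux

variable {R : Type v} [Ring R] [Algebra k R]

lemma conjL_apply (g : Rˣ) (r : R) :
    conjL k R g r = (g : R) * r * ((g⁻¹ : Rˣ) : R) := by
  simp [conjL, mul_assoc]

lemma unopL_apply (x : Rᵐᵒᵖ) : unopL k R x = unop x := rfl

lemma opL_apply (r : R) : opL k R r = op r := rfl

lemma conjOpL_apply (g : Rˣ) (r : R) :
    conjOpL k R g (op r) = op ((g : R) * r * ((g⁻¹ : Rˣ) : R)) := by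
  simp [conjOpL, conjL_apply, unopL_apply, opL_apply]

lemma conjL_conjL (g₁ g₂ : Rˣ) (r : R) :
    conjL k R g₁ (conjL k R g₂ r) = conjL k R (g₁ * g₂) r := by
  simp [conjL_apply, mul_assoc]

lemma conjL_one_apply (r : R) : conjL k R 1 r = r := by
  simp [conjL_apply]

lemma conjL_inv_comp (g : Rˣ) :
    conjL k R g⁻¹ ∘ₗ conjL k R g = LinearMap.id := by
  ext r; simp [LinearMap.comp_apply, conjL_conjL, conjL_one_apply]

lemma conjOpL_conjOpL (g₁ g₂ : Rˣ) (x : Rᵐᵒᵖ) :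
    conjOpL k R g₁ (conjOpL k R g₂ x) = conjOpL k R (g₁ * g₂) x := by
  induction x using MulOpposite.rec' with
  | h r =>
    rw [conjOpL_apply, conjOpL_apply, conjOpL_apply]
    congr 1
    simp [mul_assoc]

lemma conjOpL_one_apply (x : Rᵐᵒᵖ) : conjOpL k R 1 x = x := by
  induction x using MulOpposite.rec' with
  | h r => rw [conjOpL_apply]; simp

lemma conjOpL_inv_comp (g : Rˣ) :
    conjOpL k R g⁻¹ ∘ₗ conjOpL k R g = LinearMap.id := by
  ext x; simp [LinearMap.comp_apply, conjOpL_conjOpL, conjOpL_one_apply]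

lemma opMulL_tmul (x : Rᵐᵒᵖ) (y : R) :
    opMulL k R (x ⊗ₜ[k] y) = unop x * y := rfl

end Aux

section Aux2

variable {R : Type v} [Ring R] [Algebra k R]

lemma hrAuto_tmul (g : Rˣ) (τ : R ≃ₐ[k] R) (a : Rᵐᵒᵖ) (b : R) :
    hrAuto g τ (a ⊗ₜ[k] b) = conjOpL k R g a ⊗ₜ[k] τ b := rfl

lemma phi_tmul (H : HopfGaloisStr k R) (x : R) (y : R) :
    PhiMap H (op x ⊗ₜ[k] y)
      = LinearMap.rTensor (Rᵐᵒᵖ ⊗[k] R) (LinearMap.mulLeft k x) (H.μ y) := by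
  have : ∀ t : R ⊗[k] (Rᵐᵒᵖ ⊗[k] R),
      LinearMap.rTensor (Rᵐᵒᵖ ⊗[k] R) (opMulL k R)
        ((TensorProduct.assoc k Rᵐᵒᵖ R (Rᵐᵒᵖ ⊗[k] R)).symm (op x ⊗ₜ[k] t))
        = LinearMap.rTensor (Rᵐᵒᵖ ⊗[k] R) (LinearMap.mulLeft k x) t := by
    intro t
    induction t using TensorProduct.induction_on with
    | zero => simp
    | tmul a s =>
      rw [TensorProduct.assoc_symm_tmul]
      simp [opMulL_tmul]
    | add u v hu hv => simp [tmul_add, map_add, hu, hv]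
  simpa [PhiMap, deltaMap, LinearMap.comp_apply] using this (H.μ y)

/-- The reformulated key identity: `μ ∘ τ = (conj g ⊗ conjOp g ⊗ τ) ∘ μ`. -/
def KeyId (H : HopfGaloisStr k R) (g : Rˣ) (τ : R ≃ₐ[k] R) : Prop :=
  ∀ y : R, H.μ (τ y) = TensorProduct.map (conjL k R g)
    (TensorProduct.map (conjOpL k R g) τ.toLinearMap) (H.μ y)

lemma keyId_of_hyp (H : HopfGaloisStr k R) (g : Rˣ) (τ : R ≃ₐ[k] R)
    (idτ2 : ∀ r : R, H.μ (τ r) = TensorProduct.map τ.toLinearMap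
      (TensorProduct.map (opMapL k τ.toLinearMap) τ.toLinearMap) (H.μ r))
    (idg : ∀ r : R,
      TensorProduct.map (conjL k R g) (LinearMap.rTensor R (conjOpL k R g)) (H.μ r)
        = TensorProduct.map τ.toLinearMap
            (LinearMap.rTensor R (opMapL k τ.toLinearMap)) (H.μ r)) :
    KeyId H g τ := by
  intro y
  have h1 := congrArg (LinearMap.lTensor R (LinearMap.lTensor Rᵐᵒᵖ τ.toLinearMap)) (idg y)
  have e1 : ∀ (A : R →ₗ[k] R) (B : Rᵐᵒᵖ →ₗ[k] Rᵐᵒᵖ),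
      LinearMap.lTensor R (LinearMap.lTensor Rᵐᵒᵖ τ.toLinearMap)
        ∘ₗ TensorProduct.map A (LinearMap.rTensor R B)
      = TensorProduct.map A (TensorProduct.map B τ.toLinearMap) := by
    intro A B
    rw [LinearMap.lTensor_comp_map]
    congr 1
    rw [LinearMap.lTensor_comp_rTensor]
  rw [← LinearMap.comp_apply, ← LinearMap.comp_apply, e1, e1] at h1
  rw [idτ2 y, ← h1]

lemma keyId_inv (H : HopfGaloisStr k R) (g : Rˣ) (τ : R ≃ₐ[k] R)
    (key : KeyId H g τ) : KeyId H g⁻¹ τ.symm := by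
  intro y
  have h1 := key (τ.symm y)
  rw [τ.apply_symm_apply] at h1
  have h2 := congrArg (TensorProduct.map (conjL k R g⁻¹)
    (TensorProduct.map (conjOpL k R g⁻¹) τ.symm.toLinearMap)) h1
  rw [← LinearMap.comp_apply, ← TensorProduct.map_comp, ← TensorProduct.map_comp,
    conjL_inv_comp, conjOpL_inv_comp] at h2
  have e3 : τ.symm.toLinearMap ∘ₗ τ.toLinearMap = LinearMap.id := by
    ext r; simp
  rw [e3, TensorProduct.map_id, TensorProduct.map_id, LinearMap.id_apply] at h2
  exact h2.symm

lemma phi_hrAuto (H : HopfGaloisStr k R) (g : Rˣ) (τ : R ≃ₐ[k] R)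
    (key : KeyId H g τ) (z : Rᵐᵒᵖ ⊗[k] R) :
    PhiMap H (hrAuto g τ z)
      = TensorProduct.map (conjL k R g) (hrAuto g τ) (PhiMap H z) := by
  induction z using TensorProduct.induction_on with
  | zero => simp
  | add u v hu hv => simp [map_add, hu, hv]
  | tmul a y =>
    induction a using MulOpposite.rec' with
    | h x =>
      rw [hrAuto_tmul, conjOpL_apply, phi_tmul, key y, phi_tmul]
      rw [← LinearMap.comp_apply, ← LinearMap.comp_apply,
        LinearMap.rTensor_comp_map, hrAuto, LinearMap.map_comp_rTensor]
      congr 2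
      ext r
      simp only [LinearMap.comp_apply, LinearMap.mulLeft_apply, conjL_apply]
      calc (g : R) * x * ((g⁻¹ : Rˣ) : R) * ((g : R) * r * ((g⁻¹ : Rˣ) : R))
          = (g : R) * (x * r) * ((g⁻¹ : Rˣ) : R) := by
            simp [mul_assoc]
        _ = _ := rfl

lemma mem_HRsub_iff (H : HopfGaloisStr k R) (z : Rᵐᵒᵖ ⊗[k] R) :
    z ∈ HRsub H ↔ PhiMap H z = (1 : R) ⊗ₜ[k] z := Iff.rfl

lemma mapsTo_of_key (H : HopfGaloisStr k R) (g : Rˣ) (τ : R ≃ₐ[k] R)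
    (key : KeyId H g τ) :
    Set.MapsTo (hrAuto g τ) (HRsub H : Set (Rᵐᵒᵖ ⊗[k] R)) (HRsub H) := by
  intro z hz
  have hz' : PhiMap H z = (1 : R) ⊗ₜ[k] z := hz
  show PhiMap H (hrAuto g τ z) = (1 : R) ⊗ₜ[k] (hrAuto g τ z)
  rw [phi_hrAuto H g τ key, hz', TensorProduct.map_tmul, conjL_apply]
  simp

lemma hrAuto_inv_comp (g : Rˣ) (τ : R ≃ₐ[k] R) (z : Rᵐᵒᵖ ⊗[k] R) :
    hrAuto g⁻¹ τ.symm (hrAuto g τ z) = z := by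
  induction z using TensorProduct.induction_on with
  | zero => simp
  | add u v hu hv => simp [map_add, hu, hv]
  | tmul a y =>
    rw [hrAuto_tmul, hrAuto_tmul, conjOpL_conjOpL, inv_mul_cancel, conjOpL_one_apply,
      τ.symm_apply_apply]

lemma hrAuto_comp_inv (g : Rˣ) (τ : R ≃ₐ[k] R) (z : Rᵐᵒᵖ ⊗[k] R) :
    hrAuto g τ (hrAuto g⁻¹ τ.symm z) = z := by
  induction z using TensorProduct.induction_on with
  | zero => simp
  | add u v hu hv => simp [map_add, hu, hv]
  | tmul a y =>
    rw [hrAuto_tmul, hrAuto_tmul, conjOpL_conjOpL, mul_inv_cancel, conjOpL_one_apply,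
      τ.apply_symm_apply]

lemma bijOn_of_key (H : HopfGaloisStr k R) (g : Rˣ) (τ : R ≃ₐ[k] R)
    (key : KeyId H g τ) (keyinv : KeyId H g⁻¹ τ.symm) :
    Set.BijOn (hrAuto g τ) (HRsub H : Set (Rᵐᵒᵖ ⊗[k] R)) (HRsub H) := by
  refine ⟨mapsTo_of_key H g τ key, ?_, ?_⟩
  · intro a _ b _ hab
    have := congrArg (hrAuto g⁻¹ τ.symm) hab
    rwa [hrAuto_inv_comp, hrAuto_inv_comp] at this
  · intro w hw
    exact ⟨hrAuto g⁻¹ τ.symm w, mapsTo_of_key H g⁻¹ τ.symm keyinv hw,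
      hrAuto_comp_inv g τ w⟩

end Aux2

section Aux3

variable {R : Type v} [Ring R] [Algebra k R]

lemma conjOpL_mul (g : Rˣ) (x y : Rᵐᵒᵖ) :
    conjOpL k R g (x * y) = conjOpL k R g x * conjOpL k R g y := by
  induction x using MulOpposite.rec' with
  | h a =>
    induction y using MulOpposite.rec' with
    | h b =>
      rw [show op a * op b = op (b * a) from rfl, conjOpL_apply, conjOpL_apply,
        conjOpL_apply, show op ((g:R) * a * ((g⁻¹:Rˣ):R)) * op ((g:R) * b * ((g⁻¹:Rˣ):R))
          = op (((g:R) * b * ((g⁻¹:Rˣ):R)) * ((g:R) * a * ((g⁻¹:Rˣ):R))) from rfl]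
      congr 1
      simp [mul_assoc]

lemma conjOpL_one (g : Rˣ) : conjOpL k R g (1 : Rᵐᵒᵖ) = 1 := by
  rw [show (1 : Rᵐᵒᵖ) = op (1 : R) from rfl, conjOpL_apply]
  simp

lemma hrAuto_one (g : Rˣ) (τ : R ≃ₐ[k] R) : hrAuto g τ (1 : Rᵐᵒᵖ ⊗[k] R) = 1 := by
  rw [Algebra.TensorProduct.one_def, hrAuto_tmul, conjOpL_one, map_one]

lemma hrAuto_mul (g : Rˣ) (τ : R ≃ₐ[k] R) (z w : Rᵐᵒᵖ ⊗[k] R) :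
    hrAuto g τ (z * w) = hrAuto g τ z * hrAuto g τ w := by
  induction z using TensorProduct.induction_on with
  | zero => simp
  | add u v hu hv => simp [add_mul, map_add, hu, hv]
  | tmul a b =>
    induction w using TensorProduct.induction_on with
    | zero => simp
    | add u v hu hv => simp [mul_add, map_add, hu, hv]
    | tmul c d =>
      rw [Algebra.TensorProduct.tmul_mul_tmul, hrAuto_tmul, hrAuto_tmul, hrAuto_tmul,
        Algebra.TensorProduct.tmul_mul_tmul, conjOpL_mul, map_mul]

lemma conj_swap (a : kˣ) (g h : Rˣ)
    (hc : (g : R) * (h : R) = (a : k) • ((h : R) * (g : R))) :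
    ∀ r : R, (g : R) * ((h : R) * r * ((h⁻¹ : Rˣ) : R)) * ((g⁻¹ : Rˣ) : R)
      = (h : R) * ((g : R) * r * ((g⁻¹ : Rˣ) : R)) * ((h⁻¹ : Rˣ) : R) := by
  have hinv : ((g⁻¹ : Rˣ) : R) * ((h⁻¹ : Rˣ) : R)
      = (a : k) • (((h⁻¹ : Rˣ) : R) * ((g⁻¹ : Rˣ) : R)) := by
    calc ((g⁻¹ : Rˣ) : R) * ((h⁻¹ : Rˣ) : R)
        = ((g⁻¹ : Rˣ) : R) * (((h⁻¹ : Rˣ) : R) * (((g : R) * (h : R))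
            * (((h⁻¹ : Rˣ) : R) * ((g⁻¹ : Rˣ) : R)))) := by
          simp [mul_assoc]
      _ = ((g⁻¹ : Rˣ) : R) * (((h⁻¹ : Rˣ) : R) * (((a : k) • ((h : R) * (g : R)))
            * (((h⁻¹ : Rˣ) : R) * ((g⁻¹ : Rˣ) : R)))) := by rw [hc]
      _ = (a : k) • (((g⁻¹ : Rˣ) : R) * (((h⁻¹ : Rˣ) : R) * ((h : R) * ((g : R)
            * (((h⁻¹ : Rˣ) : R) * ((g⁻¹ : Rˣ) : R)))))) := by
          simp [smul_mul_assoc, mul_smul_comm, mul_assoc]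
      _ = (a : k) • (((h⁻¹ : Rˣ) : R) * ((g⁻¹ : Rˣ) : R)) := by
          simp [mul_assoc]
  intro r
  calc (g : R) * ((h : R) * r * ((h⁻¹ : Rˣ) : R)) * ((g⁻¹ : Rˣ) : R)
      = ((g : R) * (h : R)) * (r * (((h⁻¹ : Rˣ) : R) * ((g⁻¹ : Rˣ) : R))) := by
        simp [mul_assoc]
    _ = ((a : k) • ((h : R) * (g : R))) * (r * (((h⁻¹ : Rˣ) : R) * ((g⁻¹ : Rˣ) : R))) := by
        rw [hc]
    _ = ((h : R) * (g : R)) * (r * ((a : k) • (((h⁻¹ : Rˣ) : R) * ((g⁻¹ : Rˣ) : R)))) := by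
        simp [smul_mul_assoc, mul_smul_comm, mul_assoc]
    _ = ((h : R) * (g : R)) * (r * (((g⁻¹ : Rˣ) : R) * ((h⁻¹ : Rˣ) : R))) := by
        rw [← hinv]
    _ = (h : R) * ((g : R) * r * ((g⁻¹ : Rˣ) : R)) * ((h⁻¹ : Rˣ) : R) := by
        simp [mul_assoc]

lemma hrAuto_swap (a : kˣ) (g h : Rˣ) (τ ω : R ≃ₐ[k] R)
    (hc : (g : R) * (h : R) = (a : k) • ((h : R) * (g : R)))
    (hcomm : ∀ r : R, τ (ω r) = ω (τ r)) (z : Rᵐᵒᵖ ⊗[k] R) :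
    hrAuto g τ (hrAuto h ω z) = hrAuto h ω (hrAuto g τ z) := by
  induction z using TensorProduct.induction_on with
  | zero => simp
  | add u v hu hv => simp [map_add, hu, hv]
  | tmul x b =>
    induction x using MulOpposite.rec' with
    | h r =>
      rw [hrAuto_tmul, hrAuto_tmul, hrAuto_tmul, hrAuto_tmul,
        conjOpL_apply, conjOpL_apply, conjOpL_apply, conjOpL_apply,
        conj_swap a g h hc r, hcomm b]

end Aux3


end MyAux

/-- In the setting of Lemma H(A), the formulas
`τ'(r⊗s) = g·r ⊗ τ(s)` and `ω'(r⊗s) = h·r ⊗ ω(s)` define algebra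
automorphisms `τ', ω'` of `H̲(R)`, and `τ'ω' = ω'τ'`. -/
theorem stmt14 {k : Type u} [Field k] {R : Type v} [Ring R] [Algebra k R]
    [Nontrivial R] (H : HopfGaloisStr k R)
    (τ ω : R ≃ₐ[k] R) (g h : Rˣ) (c : R) (ξ : kˣ)
    (hyp : MainMainHyp H τ ω g h c ξ) :
    -- `τ'` and `ω'` map `H̲(R)` bijectively onto itself
    Set.BijOn (hrAuto g τ) (HRsub H : Set (Rᵐᵒᵖ ⊗[k] R)) (HRsub H) ∧
    Set.BijOn (hrAuto h ω) (HRsub H : Set (Rᵐᵒᵖ ⊗[k] R)) (HRsub H) ∧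
    -- they are algebra morphisms on `H̲(R)`
    hrAuto g τ (1 : Rᵐᵒᵖ ⊗[k] R) = 1 ∧ hrAuto h ω (1 : Rᵐᵒᵖ ⊗[k] R) = 1 ∧
    (∀ z w : Rᵐᵒᵖ ⊗[k] R, z ∈ HRsub H → w ∈ HRsub H →
      hrAuto g τ (z * w) = hrAuto g τ z * hrAuto g τ w ∧
      hrAuto h ω (z * w) = hrAuto h ω z * hrAuto h ω w) ∧
    -- `τ'` and `ω'` commute on `H̲(R)`
    (∀ z ∈ HRsub H, hrAuto g τ (hrAuto h ω z) = hrAuto h ω (hrAuto g τ z)) := by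
  have keyτ : KeyId H g τ := keyId_of_hyp H g τ hyp.idτ2 hyp.idg
  have keyω : KeyId H h ω := keyId_of_hyp H h ω hyp.idω2 hyp.idh
  obtain ⟨hgGL, -⟩ := hyp.qcg
  obtain ⟨hhGL, α, -, hα⟩ := hyp.qch
  have hc : (g : R) * (h : R) = ((α g : k)) • ((h : R) * (g : R)) := hα g hgGL
  exact ⟨bijOn_of_key H g τ keyτ (keyId_inv H g τ keyτ),
    bijOn_of_key H h ω keyω (keyId_inv H h ω keyω),
    hrAuto_one g τ, hrAuto_one h ω,
    fun z w _ _ => ⟨hrAuto_mul g τ z w, hrAuto_mul h ω z w⟩,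
    fun z _ => hrAuto_swap (α g) g h τ ω hc hyp.comm z⟩
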